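/- arXiv:1503.07946 — 5 statements merged into one kernel-verified Lean document; each statement's English description precedes it below -/
import Mathlib

section
/- Let G be a simple graph with vertices u1, v1, u2, v2 such that u1v1 and u2v2 are edges, v1v2 and u1u2 are non-edges, and all four vertices are distinct. Let G' be the graph obtained from G by deleting edges u1v1 and u2v2 and adding edges v1v2 and u1u2. If deg(v1) ≥ deg(u2) and deg(v2) ≥ deg(u1), then M2(G') ≥ M2(G), where M2(H) = Σ_{xy ∈ E(H)} deg_H(x)·deg_H(y) is the second Zagreb index. -/
open SimpleGraph Finset

/-- The second Zagreb index `M2(G) = ∑_{uv ∈ E(G)} d(u)·d(v)`. -/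
noncomputable def M2 {V : Type*} [Fintype V] (G : SimpleGraph V) : ℕ :=
  letI := Classical.decEq V
  letI : DecidableRel G.Adj := Classical.decRel _
  ∑ e ∈ G.edgeFinset,
    Sym2.lift ⟨fun x y => G.degree x * G.degree y, fun _ _ => Nat.mul_comm _ _⟩ e

/-- The degree of a vertex. -/
noncomputable def deg {V : Type*} [Fintype V] (G : SimpleGraph V) (v : V) : ℕ :=
  letI : DecidableRel G.Adj := Classical.decRel _
  G.degree v

lemma deg_eq_degree {V : Type*} [Fintype V] (G : SimpleGraph V) [DecidableRel G.Adj]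
    (v : V) : deg G v = G.degree v := by
  unfold deg
  congr!

lemma M2_eq {V : Type*} [Fintype V] [DecidableEq V] (G : SimpleGraph V)
    [DecidableRel G.Adj] :
    M2 G = ∑ e ∈ G.edgeFinset,
      Sym2.lift ⟨fun x y => G.degree x * G.degree y, fun _ _ => Nat.mul_comm _ _⟩ e := by
  unfold M2
  congr!

lemma adj_char {V : Type*} (G G' : SimpleGraph V) (x a b : V) (d e f g : Sym2 V)
    (hadj : ∀ y, G'.Adj x y ↔
      (G.Adj x y ∧ s(x, y) ≠ d ∧ s(x, y) ≠ e) ∨ s(x, y) = f ∨ s(x, y) = g)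
    (hda : ∀ y, s(x, y) = d ↔ y = a) (hgb : ∀ y, s(x, y) = g ↔ y = b)
    (hxe : x ∉ e) (hxf : x ∉ f) :
    ∀ y, G'.Adj x y ↔ (G.Adj x y ∧ y ≠ a) ∨ y = b := by
  intro y
  rw [hadj]
  constructor
  · rintro (⟨hA, h1, _⟩ | hf | hg)
    · exact Or.inl ⟨hA, fun hy => h1 ((hda y).mpr hy)⟩
    · exact absurd (hf ▸ Sym2.mem_mk_left x y) hxf
    · exact Or.inr ((hgb y).mp hg)
  · rintro (⟨hA, h1⟩ | rfl)
    · exact Or.inl ⟨hA, fun he => h1 ((hda y).mp he),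
        fun he => hxe (he ▸ Sym2.mem_mk_left x y)⟩
    · exact Or.inr (Or.inr ((hgb y).mpr rfl))

lemma degree_swap {V : Type*} [Fintype V] [DecidableEq V] (G G' : SimpleGraph V)
    [DecidableRel G.Adj] [DecidableRel G'.Adj] (x a b : V)
    (ha : G.Adj x a) (hb : ¬ G.Adj x b)
    (h : ∀ y, G'.Adj x y ↔ (G.Adj x y ∧ y ≠ a) ∨ y = b) :
    G'.degree x = G.degree x := by
  have hne : G'.neighborFinset x = insert b ((G.neighborFinset x).erase a) := by
    ext y
    simp only [mem_neighborFinset, h, Finset.mem_insert, Finset.mem_erase]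
    tauto
  have hb' : b ∉ (G.neighborFinset x).erase a := by
    simp only [Finset.mem_erase, mem_neighborFinset]; tauto
  rw [← card_neighborFinset_eq_degree, ← card_neighborFinset_eq_degree, hne,
    Finset.card_insert_of_notMem hb',
    Finset.card_erase_add_one (by rwa [mem_neighborFinset])]

set_option maxHeartbeats 1000000 in
/-- Edge-swap lemma: removing edges u₁v₁, u₂v₂ and adding v₁v₂, u₁u₂ does not
decrease the second Zagreb index when `d(v₁) ≥ d(u₂)` and `d(v₂) ≥ d(u₁)`. -/
theorem stmt_0 {V : Type*} [Fintype V] (G G' : SimpleGraph V) (u₁ v₁ u₂ v₂ : V)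
    (h1 : G.Adj u₁ v₁) (h2 : G.Adj u₂ v₂)
    (h3 : ¬ G.Adj v₁ v₂) (h4 : ¬ G.Adj u₁ u₂)
    (hd : u₁ ≠ u₂) (hd' : u₁ ≠ v₂) (hd'' : v₁ ≠ u₂) (hd''' : v₁ ≠ v₂)
    (hG' : G'.edgeSet = (G.edgeSet \ {s(u₁, v₁), s(u₂, v₂)}) ∪ {s(v₁, v₂), s(u₁, u₂)})
    (hdeg1 : deg G v₁ ≥ deg G u₂) (hdeg2 : deg G v₂ ≥ deg G u₁) :
    M2 G' ≥ M2 G := by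
  classical
  have hu1v1 : u₁ ≠ v₁ := h1.ne
  have hu2v2 : u₂ ≠ v₂ := h2.ne
  -- adjacency characterization of G'
  have hadj : ∀ a b : V, G'.Adj a b ↔
      (G.Adj a b ∧ s(a,b) ≠ s(u₁,v₁) ∧ s(a,b) ≠ s(u₂,v₂)) ∨
      s(a,b) = s(v₁,v₂) ∨ s(a,b) = s(u₁,u₂) := by
    intro a b
    rw [← SimpleGraph.mem_edgeSet, hG']
    simp only [Set.mem_union, Set.mem_diff, Set.mem_insert_iff, Set.mem_singleton_iff,
      SimpleGraph.mem_edgeSet, not_or]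
  -- degrees preserved
  have hdegu1 : G'.degree u₁ = G.degree u₁ := by
    refine degree_swap G G' u₁ v₁ u₂ h1 h4
      (adj_char G G' u₁ v₁ u₂ s(u₁,v₁) s(u₂,v₂) s(v₁,v₂) s(u₁,u₂)
        (fun y => (hadj u₁ y).trans (by tauto))
        (fun y => Sym2.congr_right) (fun y => Sym2.congr_right)
        (by simp [Sym2.mem_iff, hd, hd'])
        (by simp [Sym2.mem_iff, hu1v1, hd']))
  have hdegv1 : G'.degree v₁ = G.degree v₁ := by
    refine degree_swap G G' v₁ u₁ v₂ h1.symm (fun h => h3 h)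
      (adj_char G G' v₁ u₁ v₂ s(u₁,v₁) s(u₂,v₂) s(u₁,u₂) s(v₁,v₂)
        (fun y => (hadj v₁ y).trans (by tauto))
        (fun y => by simp [Sym2.eq_iff, hu1v1.symm])
        (fun y => Sym2.congr_right)
        (by simp [Sym2.mem_iff, hd'', hd'''])
        (by simp [Sym2.mem_iff, hu1v1.symm, hd'']))
  have hdegu2 : G'.degree u₂ = G.degree u₂ := by
    refine degree_swap G G' u₂ v₂ u₁ h2 (fun h => h4 h.symm)
      (adj_char G G' u₂ v₂ u₁ s(u₂,v₂) s(u₁,v₁) s(v₁,v₂) s(u₁,u₂)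
        (fun y => (hadj u₂ y).trans (by tauto))
        (fun y => Sym2.congr_right)
        (fun y => by simp [Sym2.eq_iff, hd.symm])
        (by simp [Sym2.mem_iff, hd.symm, hd''.symm])
        (by simp [Sym2.mem_iff, hd''.symm, hu2v2]))
  have hdegv2 : G'.degree v₂ = G.degree v₂ := by
    refine degree_swap G G' v₂ u₂ v₁ h2.symm (fun h => h3 h.symm)
      (adj_char G G' v₂ u₂ v₁ s(u₂,v₂) s(u₁,v₁) s(u₁,u₂) s(v₁,v₂)
        (fun y => (hadj v₂ y).trans (by tauto))
        (fun y => by simp [Sym2.eq_iff, hu2v2.symm])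
        (fun y => by simp [Sym2.eq_iff, hd'''.symm])
        (by simp [Sym2.mem_iff, hd'.symm, hd'''.symm])
        (by simp [Sym2.mem_iff, hd'.symm, hu2v2.symm]))
  have hdeg : ∀ x, G'.degree x = G.degree x := by
    intro x
    by_cases hx1 : x = u₁
    · exact hx1 ▸ hdegu1
    by_cases hx2 : x = v₁
    · exact hx2 ▸ hdegv1
    by_cases hx3 : x = u₂
    · exact hx3 ▸ hdegu2
    by_cases hx4 : x = v₂
    · exact hx4 ▸ hdegv2
    have hsame : G'.neighborFinset x = G.neighborFinset x := by
      ext y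
      rw [mem_neighborFinset, mem_neighborFinset, hadj]
      constructor
      · rintro (⟨h, _, _⟩ | hf | hg)
        · exact h
        · exact absurd (Sym2.eq_iff.mp hf)
            (by rintro (⟨h, _⟩ | ⟨h, _⟩); exacts [hx2 h, hx4 h])
        · exact absurd (Sym2.eq_iff.mp hg)
            (by rintro (⟨h, _⟩ | ⟨h, _⟩); exacts [hx1 h, hx3 h])
      · intro h
        refine Or.inl ⟨h, fun he => ?_, fun he => ?_⟩
        · rcases Sym2.eq_iff.mp he with ⟨h', _⟩ | ⟨h', _⟩
          exacts [hx1 h', hx2 h']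
        · rcases Sym2.eq_iff.mp he with ⟨h', _⟩ | ⟨h', _⟩
          exacts [hx3 h', hx4 h']
    rw [← card_neighborFinset_eq_degree, ← card_neighborFinset_eq_degree, hsame]
  -- the weight function (with respect to G's degrees)
  set w : Sym2 V → ℕ :=
    Sym2.lift ⟨fun x y => G.degree x * G.degree y, fun _ _ => Nat.mul_comm _ _⟩ with hw
  have hM2G : M2 G = ∑ e ∈ G.edgeFinset, w e := M2_eq G
  have hM2G' : M2 G' = ∑ e ∈ G'.edgeFinset, w e := by
    rw [M2_eq G']
    refine Finset.sum_congr rfl fun e _ => ?_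
    refine Sym2.ind (fun x y => ?_) e
    simp [hw, hdeg]
  -- finset manipulation
  set e1 := s(u₁, v₁); set e2 := s(u₂, v₂); set f1 := s(v₁, v₂); set f2 := s(u₁, u₂)
  have he1F : e1 ∈ G.edgeFinset := by rwa [mem_edgeFinset, SimpleGraph.mem_edgeSet]
  have he2F : e2 ∈ G.edgeFinset := by rwa [mem_edgeFinset, SimpleGraph.mem_edgeSet]
  have hf1F : f1 ∉ G.edgeFinset := by rwa [mem_edgeFinset, SimpleGraph.mem_edgeSet]
  have hf2F : f2 ∉ G.edgeFinset := by rwa [mem_edgeFinset, SimpleGraph.mem_edgeSet]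
  have he12 : e1 ≠ e2 := fun h => by
    rcases Sym2.eq_iff.mp h with ⟨h', _⟩ | ⟨h', _⟩
    exacts [hd h', hd' h']
  have hf12 : f1 ≠ f2 := fun h => by
    rcases Sym2.eq_iff.mp h with ⟨h', _⟩ | ⟨h', _⟩
    exacts [hu1v1 h'.symm, hd'' h']
  have hF' : G'.edgeFinset = (G.edgeFinset \ {e1, e2}) ∪ {f1, f2} := by
    ext e
    rw [mem_edgeFinset, hG']
    simp only [Set.mem_union, Set.mem_diff, Set.mem_insert_iff, Set.mem_singleton_iff,
      Finset.mem_union, Finset.mem_sdiff, Finset.mem_insert, Finset.mem_singleton,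
      mem_edgeFinset, not_or]
  have hdisj1 : Disjoint (G.edgeFinset \ {e1, e2}) {f1, f2} := by
    rw [Finset.disjoint_right]
    intro e he
    simp only [Finset.mem_insert, Finset.mem_singleton] at he
    rcases he with rfl | rfl <;> simp only [Finset.mem_sdiff] <;> tauto
  have hsub : {e1, e2} ⊆ G.edgeFinset := by
    intro e he
    simp only [Finset.mem_insert, Finset.mem_singleton] at he
    rcases he with rfl | rfl <;> assumption
  have hsumG' : ∑ e ∈ G'.edgeFinset, w e
      = (∑ e ∈ G.edgeFinset \ {e1, e2}, w e) + (w f1 + w f2) := by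
    rw [hF', Finset.sum_union hdisj1, Finset.sum_pair hf12]
  have hsumG : ∑ e ∈ G.edgeFinset, w e
      = (∑ e ∈ G.edgeFinset \ {e1, e2}, w e) + (w e1 + w e2) := by
    conv_lhs => rw [← Finset.sdiff_union_of_subset hsub]
    rw [Finset.sum_union Finset.sdiff_disjoint, Finset.sum_pair he12]
  have hw1 : w e1 = G.degree u₁ * G.degree v₁ := rfl
  have hw2 : w e2 = G.degree u₂ * G.degree v₂ := rfl
  have hw3 : w f1 = G.degree v₁ * G.degree v₂ := rfl
  have hw4 : w f2 = G.degree u₁ * G.degree u₂ := rfl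
  rw [deg_eq_degree, deg_eq_degree] at hdeg1 hdeg2
  have key : w f1 + w f2 ≥ w e1 + w e2 := by
    rw [hw1, hw2, hw3, hw4]
    nlinarith [hdeg1, hdeg2]
  rw [hM2G, hM2G', hsumG, hsumG']
  omega
end

section
/- Let G be a simple graph with vertices u1, v1, u2, v2 such that u1v1 and u2v2 are edges, v1v2 and u1u2 are non-edges, and all four vertices are distinct. Let G' = G - u1v1 - u2v2 + v1v2 + u1u2. If deg(v1) > deg(u2) and deg(v2) > deg(u1), then M2(G') > M2(G). -/
open SimpleGraph Finset

private lemma card_swap {V : Type*} [DecidableEq V] (N : Finset V) (a b : V)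
    (ha : a ∈ N) (hb : b ∉ N) : (insert b (N.erase a)).card = N.card := by
  rw [Finset.card_insert_of_notMem (fun h => hb (Finset.mem_of_mem_erase h)),
    Finset.card_erase_of_mem ha]
  have : 0 < N.card := Finset.card_pos.mpr ⟨a, ha⟩
  omega

set_option maxHeartbeats 2000000 in
/-- Strict version of the edge-swap lemma. -/
theorem stmt_1 {V : Type*} [Fintype V] (G G' : SimpleGraph V) (u₁ v₁ u₂ v₂ : V)
    (h1 : G.Adj u₁ v₁) (h2 : G.Adj u₂ v₂)
    (h3 : ¬ G.Adj v₁ v₂) (h4 : ¬ G.Adj u₁ u₂)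
    (hd : u₁ ≠ u₂) (hd' : u₁ ≠ v₂) (hd'' : v₁ ≠ u₂) (hd''' : v₁ ≠ v₂)
    (hG' : G'.edgeSet = (G.edgeSet \ {s(u₁, v₁), s(u₂, v₂)}) ∪ {s(v₁, v₂), s(u₁, u₂)})
    (hdeg1 : deg G v₁ > deg G u₂) (hdeg2 : deg G v₂ > deg G u₁) :
    M2 G' > M2 G := by
  letI := Classical.decEq V
  letI : DecidableRel G.Adj := Classical.decRel _
  letI : DecidableRel G'.Adj := Classical.decRel _
  have hn1 : u₁ ≠ v₁ := h1.ne
  have hn2 : u₂ ≠ v₂ := h2.ne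
  have hadj : ∀ a b, G'.Adj a b ↔
      (G.Adj a b ∧ ¬(s(a,b) = s(u₁,v₁) ∨ s(a,b) = s(u₂,v₂))) ∨
      (s(a,b) = s(v₁,v₂) ∨ s(a,b) = s(u₁,u₂)) := by
    intro a b
    rw [← SimpleGraph.mem_edgeSet, hG']
    simp only [Set.mem_union, Set.mem_diff, Set.mem_insert_iff, Set.mem_singleton_iff,
      SimpleGraph.mem_edgeSet]
  -- degree preservation
  have hdeg : ∀ x, G'.degree x = G.degree x := by
    intro x
    by_cases hx1 : x = u₁
    · subst hx1
      have hset : G'.neighborFinset x = insert u₂ ((G.neighborFinset x).erase v₁) := by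
        ext y
        simp only [mem_neighborFinset, hadj, Finset.mem_insert, Finset.mem_erase, Sym2.eq_iff]
        constructor
        · rintro (⟨ha, hne⟩ | h) <;> tauto
        · rintro (rfl | ⟨hne, ha⟩)
          · tauto
          · exact Or.inl ⟨ha, by tauto⟩
      rw [← card_neighborFinset_eq_degree, ← card_neighborFinset_eq_degree, hset,
        card_swap _ v₁ u₂ (by simpa using h1) (by simpa using h4)]
    · by_cases hx2 : x = v₁
      · subst hx2
        have hset : G'.neighborFinset x = insert v₂ ((G.neighborFinset x).erase u₁) := by
          ext y
          simp only [mem_neighborFinset, hadj, Finset.mem_insert, Finset.mem_erase, Sym2.eq_iff]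
          constructor
          · rintro (⟨ha, hne⟩ | h) <;> tauto
          · rintro (rfl | ⟨hne, ha⟩)
            · tauto
            · exact Or.inl ⟨ha, by tauto⟩
        rw [← card_neighborFinset_eq_degree, ← card_neighborFinset_eq_degree, hset,
          card_swap _ u₁ v₂ (by simpa using h1.symm) (by simpa using h3)]
      · by_cases hx3 : x = u₂
        · subst hx3
          have hset : G'.neighborFinset x = insert u₁ ((G.neighborFinset x).erase v₂) := by
            ext y
            simp only [mem_neighborFinset, hadj, Finset.mem_insert, Finset.mem_erase, Sym2.eq_iff]
            constructor
            · rintro (⟨ha, hne⟩ | h) <;> tauto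
            · rintro (rfl | ⟨hne, ha⟩)
              · tauto
              · exact Or.inl ⟨ha, by tauto⟩
          rw [← card_neighborFinset_eq_degree, ← card_neighborFinset_eq_degree, hset,
            card_swap _ v₂ u₁ (by simpa using h2) (by simpa using fun h => h4 h.symm)]
        · by_cases hx4 : x = v₂
          · subst hx4
            have hset : G'.neighborFinset x = insert v₁ ((G.neighborFinset x).erase u₂) := by
              ext y
              simp only [mem_neighborFinset, hadj, Finset.mem_insert, Finset.mem_erase, Sym2.eq_iff]
              constructor
              · rintro (⟨ha, hne⟩ | h) <;> tauto
              · rintro (rfl | ⟨hne, ha⟩)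
                · tauto
                · exact Or.inl ⟨ha, by tauto⟩
            rw [← card_neighborFinset_eq_degree, ← card_neighborFinset_eq_degree, hset,
              card_swap _ u₂ v₁ (by simpa using h2.symm) (by simpa using fun h => h3 h.symm)]
          · have hset : G'.neighborFinset x = G.neighborFinset x := by
              ext y
              simp only [mem_neighborFinset, hadj, Sym2.eq_iff]
              tauto
            rw [← card_neighborFinset_eq_degree, ← card_neighborFinset_eq_degree, hset]
  -- the weight function
  set f : Sym2 V → ℕ :=
    Sym2.lift ⟨fun x y => G.degree x * G.degree y, fun _ _ => Nat.mul_comm _ _⟩ with hf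
  have hM2G : M2 G = ∑ e ∈ G.edgeFinset, f e := rfl
  have hM2G' : M2 G' = ∑ e ∈ G'.edgeFinset, f e := by
    show (∑ e ∈ G'.edgeFinset,
      Sym2.lift ⟨fun x y => G'.degree x * G'.degree y, fun _ _ => Nat.mul_comm _ _⟩ e) = _
    refine Finset.sum_congr rfl fun e _ => ?_
    induction e using Sym2.ind with
    | _ a b => simp [hf, hdeg]
  -- edge finset relation
  have hE : G'.edgeFinset =
      (G.edgeFinset \ {s(u₁, v₁), s(u₂, v₂)}) ∪ {s(v₁, v₂), s(u₁, u₂)} := by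
    ext e
    simp only [Finset.mem_union, Finset.mem_sdiff, Finset.mem_insert, Finset.mem_singleton,
      mem_edgeFinset, hG', Set.mem_union, Set.mem_diff, Set.mem_insert_iff,
      Set.mem_singleton_iff]
  have he12 : s(u₁, v₁) ≠ s(u₂, v₂) := by
    intro h
    rw [Sym2.eq_iff] at h
    tauto
  have he34 : s(v₁, v₂) ≠ s(u₁, u₂) := by
    intro h
    rw [Sym2.eq_iff] at h
    tauto
  have hsub : ({s(u₁, v₁), s(u₂, v₂)} : Finset (Sym2 V)) ⊆ G.edgeFinset := by
    intro e he
    simp only [Finset.mem_insert, Finset.mem_singleton] at he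
    rcases he with rfl | rfl <;> simpa using (by assumption : _)
  have h3' : s(v₁, v₂) ∉ G.edgeFinset := by simpa using h3
  have h4' : s(u₁, u₂) ∉ G.edgeFinset := by simpa using h4
  have hdisj : Disjoint (G.edgeFinset \ {s(u₁, v₁), s(u₂, v₂)})
      ({s(v₁, v₂), s(u₁, u₂)} : Finset (Sym2 V)) := by
    rw [Finset.disjoint_right]
    intro e he
    simp only [Finset.mem_insert, Finset.mem_singleton] at he
    rcases he with rfl | rfl <;> simp [h3', h4']
  have key : M2 G' + (f s(u₁, v₁) + f s(u₂, v₂)) = M2 G + (f s(v₁, v₂) + f s(u₁, u₂)) := by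
    rw [hM2G, hM2G', hE, Finset.sum_union hdisj, Finset.sum_pair he34]
    have h5 := Finset.sum_sdiff (f := f) hsub
    rw [Finset.sum_pair he12] at h5
    omega
  have hval : ∀ a b : V, f s(a, b) = G.degree a * G.degree b := fun a b => rfl
  have hd1 : G.degree v₁ > G.degree u₂ := hdeg1
  have hd2 : G.degree v₂ > G.degree u₁ := hdeg2
  have hineq : f s(u₁, v₁) + f s(u₂, v₂) < f s(v₁, v₂) + f s(u₁, u₂) := by
    rw [hval, hval, hval, hval]
    nlinarith [hd1, hd2]
  omega
end

section
/- Let G be a simple graph, u and v two distinct vertices, and w1,...,wk (1 ≤ k ≤ deg(v)) distinct vertices that are neighbors of v but neither neighbors of u nor equal to u. Let G' be obtained from G by deleting the edges w_i v and adding the edges w_i u for all i. If deg(u) ≥ deg(v) and Σ_{y ∈ N(u)} deg(y) ≥ Σ_{x ∈ N(v)} deg(x), then M2(G') > M2(G). -/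
open SimpleGraph Finset

/-!
Write `d` for the degrees in `G`, `S(x) = ∑_{y ∈ N(x)} d(y)`, `W = {w₁, …, w_k}` and
`T = ∑_{w ∈ W} d(w)`. The degrees in `G'` are `d + k (𝟙_u - 𝟙_v)`, so summing the new degree
products over the old edges gives `M2(G) + k (S(u) - S(v)) - k² [uv ∈ E(G)]`, the cross term being
counted over darts. Trading the edges `w v` for the edges `w u` then adds `T (d(u) - d(v) + 2k)`.
As `S(u) ≥ S(v)`, `d(u) ≥ d(v)` and `T ≥ k`, the increase is at least `2k² - k² > 0`.
-/

namespace SimpleGraph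

variable {V : Type*} [Fintype V] (G : SimpleGraph V) [DecidableRel G.Adj] {R : Type*} [CommRing R]

def edgeProdSum (g : V → R) : R :=
  ∑ e ∈ G.edgeFinset, Sym2.lift ⟨fun x y => g x * g y, fun _ _ => mul_comm _ _⟩ e

theorem natCast_M2 : (M2 G : ℤ) = G.edgeProdSum fun x => (G.degree x : ℤ) := by
  unfold M2 edgeProdSum
  rw [Nat.cast_sum]
  convert rfl with e
  induction e with | _ a b => push_cast [Sym2.lift_mk]; congr!

variable [DecidableEq V]

theorem sum_darts_eq_sum_neighborFinset {M : Type*} [AddCommMonoid M] (F : V → V → M) :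
    ∑ d : G.Dart, F d.fst d.snd = ∑ x, ∑ y ∈ G.neighborFinset x, F x y := by
  rw [← sum_fiberwise univ (fun d : G.Dart => d.fst)]
  refine sum_congr rfl fun x _ => ?_
  rw [dart_fst_fiber, sum_image fun _ _ _ _ h => G.dartOfNeighborSet_injective x h]
  exact (sum_subtype _ (fun _ => Set.mem_toFinset) (F x)).symm

theorem sum_darts_eq_sum_edgeFinset {M : Type*} [AddCommMonoid M] (F : V → V → M) :
    ∑ d : G.Dart, F d.fst d.snd =
      ∑ e ∈ G.edgeFinset, Sym2.lift ⟨fun x y => F x y + F y x, fun _ _ => add_comm _ _⟩ e := by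
  rw [← sum_fiberwise_of_maps_to (g := Dart.edge) (t := G.edgeFinset)
    fun d _ => mem_edgeFinset.2 d.edge_mem]
  refine sum_congr rfl fun e he => ?_
  induction e with | _ a b =>
  let d : G.Dart := ⟨(a, b), mem_edgeFinset.1 he⟩
  rw [show s(a, b) = d.edge from rfl, d.edge_fiber, sum_pair d.symm_ne.symm]
  rfl

theorem sum_sum_neighborFinset_eq_sum_edgeFinset {M : Type*} [AddCommMonoid M]
    (F : V → V → M) :
    ∑ x, ∑ y ∈ G.neighborFinset x, F x y =
      ∑ e ∈ G.edgeFinset, Sym2.lift ⟨fun x y => F x y + F y x, fun _ _ => add_comm _ _⟩ e :=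
  (G.sum_darts_eq_sum_neighborFinset F).symm.trans (G.sum_darts_eq_sum_edgeFinset F)

theorem edgeProdSum_add (g h : V → R) :
    G.edgeProdSum (g + h) =
      G.edgeProdSum g + ∑ x, h x * ∑ y ∈ G.neighborFinset x, g y + G.edgeProdSum h := by
  simp only [mul_sum, sum_sum_neighborFinset_eq_sum_edgeFinset, edgeProdSum, ← sum_add_distrib]
  refine sum_congr rfl fun e _ => ?_
  induction e with | _ a b => simp only [Sym2.lift_mk, Pi.add_apply]; ring

theorem edgeProdSum_single_sub_single {u v : V} (huv : u ≠ v) (c : R) :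
    G.edgeProdSum (Pi.single u c - Pi.single v c) = if G.Adj u v then -c ^ 2 else 0 := by
  have hpick := sum_ite_eq' G.edgeFinset s(u, v) fun _ => -c ^ 2
  simp only [mem_edgeFinset, mem_edgeSet] at hpick
  rw [← hpick]
  refine sum_congr rfl fun e he => ?_
  induction e with | _ a b =>
  have hab : a ≠ b := (mem_edgeFinset.1 he).ne
  simp only [Sym2.lift_mk, Pi.sub_apply, Pi.single_apply, Sym2.eq_iff]
  split_ifs <;> simp_all [sq]

theorem natCast_degree_eq_sum_edgeFinset (x : V) :
    (G.degree x : ℤ) = ∑ e ∈ G.edgeFinset, if x ∈ e then 1 else 0 := by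
  rw [sum_boole, ← incidenceFinset_eq_filter, card_incidenceFinset_eq_degree]

variable {G} {G' : SimpleGraph V} [DecidableRel G'.Adj] {u v : V} {W : Finset V}

theorem sum_edgeFinset_of_edgeSet_eq {M : Type*} [AddCommGroup M]
    (hv : ∀ w ∈ W, G.Adj v w) (hu : ∀ w ∈ W, ¬ G.Adj u w)
    (hG' : G'.edgeSet = (G.edgeSet \ (s(·, v)) '' W) ∪ (s(·, u)) '' W) (f : Sym2 V → M) :
    ∑ e ∈ G'.edgeFinset, f e =
      ∑ e ∈ G.edgeFinset, f e - ∑ w ∈ W, f s(w, v) + ∑ w ∈ W, f s(w, u) := by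
  have hedges : G'.edgeFinset =
      (G.edgeFinset \ W.image (s(·, v))) ∪ W.image (s(·, u)) := by
    apply coe_injective
    push_cast
    exact hG'
  have hremoved : W.image (s(·, v)) ⊆ G.edgeFinset := by
    simpa [subset_iff] using fun w hw => (hv w hw).symm
  have hdisjoint : Disjoint (G.edgeFinset \ W.image (s(·, v))) (W.image (s(·, u))) := by
    refine Finset.disjoint_left.2 fun e he he' => ?_
    simp only [mem_image] at he'
    obtain ⟨w, hw, rfl⟩ := he'
    exact hu w hw (mem_edgeFinset.1 (mem_sdiff.1 he).1).symm
  rw [hedges, sum_union hdisjoint, sum_sdiff_eq_sub hremoved,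
    sum_image fun _ _ _ _ h => Sym2.congr_left.1 h,
    sum_image fun _ _ _ _ h => Sym2.congr_left.1 h]

theorem natCast_degree_of_edgeSet_eq (huv : u ≠ v) (huW : u ∉ W)
    (hv : ∀ w ∈ W, G.Adj v w) (hu : ∀ w ∈ W, ¬ G.Adj u w)
    (hG' : G'.edgeSet = (G.edgeSet \ (s(·, v)) '' W) ∪ (s(·, u)) '' W) (x : V) :
    (G'.degree x : ℤ) = G.degree x + (Pi.single u (#W : ℤ) - Pi.single v #W : V → ℤ) x := by
  have hvW : v ∉ W := fun h => (hv v h).ne rfl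
  rw [G'.natCast_degree_eq_sum_edgeFinset, sum_edgeFinset_of_edgeSet_eq hv hu hG',
    ← G.natCast_degree_eq_sum_edgeFinset]
  simp only [Sym2.mem_iff, Pi.sub_apply, Pi.single_apply]
  rcases eq_or_ne x u with rfl | hxu
  · simp [huv, huW]
  rcases eq_or_ne x v with rfl | hxv
  · simp [hxu, hvW, sub_eq_add_neg]
  · simp [hxu, hxv]

theorem natCast_M2_of_edgeSet_eq (huv : u ≠ v) (huW : u ∉ W)
    (hv : ∀ w ∈ W, G.Adj v w) (hu : ∀ w ∈ W, ¬ G.Adj u w)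
    (hG' : G'.edgeSet = (G.edgeSet \ (s(·, v)) '' W) ∪ (s(·, u)) '' W) :
    (M2 G' : ℤ) = M2 G
      + #W * (∑ y ∈ G.neighborFinset u, (G.degree y : ℤ)
        - ∑ y ∈ G.neighborFinset v, (G.degree y : ℤ))
      - (if G.Adj u v then (#W : ℤ) ^ 2 else 0)
      + (∑ w ∈ W, (G.degree w : ℤ)) * (G.degree u - G.degree v + 2 * #W) := by
  rw [G.natCast_M2, G'.natCast_M2]
  set d : V → ℤ := fun x => G.degree x
  set h : V → ℤ := Pi.single u #W - Pi.single v #W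
  have hd' : (fun x => (G'.degree x : ℤ)) = d + h :=
    funext (natCast_degree_of_edgeSet_eq huv huW hv hu hG')
  have hvW : v ∉ W := fun hvW => (hv v hvW).ne rfl
  have hW : ∀ w ∈ W, (d + h) w = d w := fun w hw => by
    simp [h, ne_of_mem_of_not_mem hw huW, ne_of_mem_of_not_mem hw hvW]
  rw [hd', edgeProdSum, sum_edgeFinset_of_edgeSet_eq hv hu hG',
    ← edgeProdSum, edgeProdSum_add, G.edgeProdSum_single_sub_single huv]
  have hmoved (x : V) : ∑ w ∈ W, Sym2.lift ⟨fun x y => (d + h) x * (d + h) y,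
      fun _ _ => mul_comm _ _⟩ s(w, x) = (∑ w ∈ W, d w) * (d + h) x := by
    rw [sum_mul]
    exact sum_congr rfl fun w hw => by simp only [Sym2.lift_mk, hW w hw]
  have hcross : ∑ x, h x * ∑ y ∈ G.neighborFinset x, d y =
      #W * (∑ y ∈ G.neighborFinset u, d y - ∑ y ∈ G.neighborFinset v, d y) := by
    simp [h, Pi.single_apply, sub_mul, sum_sub_distrib, mul_sub]
  rw [hmoved, hmoved, hcross]
  simp [h, huv, huv.symm]
  split_ifs <;> ring

theorem M2_lt_of_edgeSet_eq (huv : u ≠ v) (huW : u ∉ W) (hW : W.Nonempty)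
    (hv : ∀ w ∈ W, G.Adj v w) (hu : ∀ w ∈ W, ¬ G.Adj u w)
    (hG' : G'.edgeSet = (G.edgeSet \ (s(·, v)) '' W) ∪ (s(·, u)) '' W)
    (hdeg : G.degree v ≤ G.degree u)
    (hsum : ∑ y ∈ G.neighborFinset v, G.degree y ≤ ∑ y ∈ G.neighborFinset u, G.degree y) :
    M2 G < M2 G' := by
  have hmoved : #W ≤ ∑ w ∈ W, G.degree w := by
    rw [card_eq_sum_ones]
    exact sum_le_sum fun w hw => (G.degree_pos_iff_exists_adj w).2 ⟨v, (hv w hw).symm⟩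
  have hk : 0 < #W := hW.card_pos
  zify at hmoved hk hdeg hsum ⊢
  rw [natCast_M2_of_edgeSet_eq huv huW hv hu hG']
  split_ifs <;> nlinarith

end SimpleGraph

theorem stmt_2_general {V : Type*} [Fintype V] (G G' : SimpleGraph V) (u v : V) (huv : u ≠ v)
    (k : ℕ) (hk1 : 1 ≤ k)
    (w : Fin k → V)
    (hwv : ∀ i, G.Adj v (w i))
    (hwu : ∀ i, ¬ G.Adj u (w i)) (hwu' : ∀ i, w i ≠ u)
    (hG' : G'.edgeSet =
      (G.edgeSet \ Set.range fun i => s(w i, v)) ∪ Set.range fun i => s(w i, u))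
    (hdeg : deg G u ≥ deg G v)
    (hsum : ∑ y ∈ (G.neighborSet u).toFinite.toFinset, deg G y ≥
            ∑ x ∈ (G.neighborSet v).toFinite.toFinset, deg G x) :
    M2 G' > M2 G := by
  classical
  have hdeg_eq (x : V) : deg G x = G.degree x := by unfold deg; congr!
  have hnbr (x : V) : (G.neighborSet x).toFinite.toFinset = G.neighborFinset x := by ext; simp
  simp only [hdeg_eq, hnbr] at hdeg hsum
  have hW : (univ.image w).Nonempty := univ_nonempty_iff.2 ⟨⟨0, hk1⟩⟩ |>.image w
  refine M2_lt_of_edgeSet_eq huv (by simpa using hwu') hW (by simpa using hwv)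
    (by simpa using hwu) ?_ hdeg hsum
  rw [coe_image, coe_univ, Set.image_univ, ← Set.range_comp, ← Set.range_comp]
  exact hG'

/-- Moving `k` neighbors `w₁, …, w_k` of `v` (none of which is `u` or adjacent to `u`)
from `v` to `u` strictly increases the second Zagreb index, provided
`d(u) ≥ d(v)` and `∑_{y ∈ N(u)} d(y) ≥ ∑_{x ∈ N(v)} d(x)`. -/
theorem stmt_2 {V : Type*} [Fintype V] (G G' : SimpleGraph V) (u v : V) (huv : u ≠ v)
    (k : ℕ) (hk1 : 1 ≤ k) (hk2 : k ≤ deg G v)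
    (w : Fin k → V) (hw : Function.Injective w)
    (hwv : ∀ i, G.Adj v (w i))
    (hwu : ∀ i, ¬ G.Adj u (w i)) (hwu' : ∀ i, w i ≠ u)
    (hG' : G'.edgeSet =
      (G.edgeSet \ Set.range fun i => s(w i, v)) ∪ Set.range fun i => s(w i, u))
    (hdeg : deg G u ≥ deg G v)
    (hsum : ∑ y ∈ (G.neighborSet u).toFinite.toFinset, deg G y ≥
            ∑ x ∈ (G.neighborSet v).toFinite.toFinset, deg G x) :
    M2 G' > M2 G :=
  stmt_2_general G G' u v huv k hk1 w hwv hwu hwu' hG' hdeg hsum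
end

section
/- Let n and s be positive integers with (n−5)/2 < s ≤ n − 5, and let G = B(3,3; 2,...,2,1,...,1) be the bicyclic graph of order n obtained from two triangles sharing one vertex by attaching, at the common vertex, n − s − 5 pendant paths of length 2 and 2s − n + 5 pendant edges. Then M2(G) = sn + 6n + s + 10. -/
open SimpleGraph Finset

section KeyLemma

variable {V : Type*} [Fintype V] [DecidableEq V]

private lemma key_lemma (G : SimpleGraph V) [DecidableRel G.Adj] (n s : ℕ)
    (hs1 : n < 2 * s + 5) (hs2 : s + 5 ≤ n)
    (hedges : G.edgeFinset.card = n + 1)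
    (c : V) (hc : G.degree c = s + 4)
    (hother : ∀ v : V, v ≠ c → G.degree v = 1 ∨ G.degree v = 2)
    (hleafadj : (univ.filter (fun v => G.degree v = 1 ∧ G.Adj c v)).card = 2 * s + 5 - n)
    (hleafnadj : (univ.filter (fun v => G.degree v = 1 ∧ ¬ G.Adj c v)).card = n - s - 5)
    (hleafnbr : ∀ v w : V, G.degree v = 1 → ¬ G.Adj c v → G.Adj v w → G.degree w = 2) :
    ∑ e ∈ G.edgeFinset,
      Sym2.lift ⟨fun x y => G.degree x * G.degree y, fun _ _ => Nat.mul_comm _ _⟩ e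
      = s * n + 6 * n + s + 10 := by
  classical
  have hdv : ∀ v, (G.neighborFinset v).card = G.degree v := fun v => rfl
  set f : Sym2 V → ℕ :=
    Sym2.lift ⟨fun x y => G.degree x * G.degree y, fun _ _ => Nat.mul_comm _ _⟩ with hf
  have hfmk : ∀ x y : V, f s(x, y) = G.degree x * G.degree y := fun x y => by simp [hf]
  have hsc : 0 < s := by omega
  have hcne : ∀ v : V, G.degree v = 1 ∨ G.degree v = 2 → v ≠ c := by
    intro v hv h
    subst h
    rw [hc] at hv
    omega
  have huniq : ∀ v w w' : V, G.degree v = 1 → G.Adj v w → G.Adj v w' → w = w' := by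
    intro v w w' h1 hw hw'
    have hcard1 : (G.neighborFinset v).card ≤ 1 := by rw [hdv]; omega
    exact Finset.card_le_one.mp hcard1 w (by simpa using hw) w' (by simpa using hw')
  have hnadj : ∀ v w : V, G.degree v = 1 → G.Adj v w → w ≠ c → ¬ G.Adj c v := by
    intro v w h1 hw hwc hcv
    exact hwc (huniq v w c h1 hw hcv.symm)
  have hex : ∀ v : V, G.degree v = 1 → ∃ w, G.Adj v w := by
    intro v h1
    have hpos : (G.neighborFinset v).Nonempty := Finset.card_pos.mp (by rw [hdv]; omega)
    obtain ⟨w, hw⟩ := hpos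
    exact ⟨w, by simpa using hw⟩
  set nb : V → V := fun v => if h : ∃ w, G.Adj v w then h.choose else v with hnb
  have hnbadj : ∀ v : V, G.degree v = 1 → G.Adj v (nb v) := by
    intro v h1
    have h := hex v h1
    rw [hnb]
    simp only [dif_pos h]
    exact h.choose_spec
  have hnbuniq : ∀ v w : V, G.degree v = 1 → G.Adj v w → nb v = w :=
    fun v w h1 hw => huniq v (nb v) w h1 (hnbadj v h1) hw
  -- edges through c
  have hAim : G.edgeFinset.filter (fun e => c ∈ e)
      = (G.neighborFinset c).image (fun w => s(c, w)) := by
    ext e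
    induction e using Sym2.ind with
    | _ x y =>
      simp only [Finset.mem_filter, mem_edgeFinset, mem_edgeSet, Sym2.mem_iff,
        Finset.mem_image, mem_neighborFinset]
      constructor
      · rintro ⟨hadj, hcx | hcy⟩
        · exact ⟨y, hcx ▸ hadj, by rw [hcx]⟩
        · exact ⟨x, hcy ▸ hadj.symm, by rw [hcy]; exact Sym2.eq_swap⟩
      · rintro ⟨w, hw, he⟩
        rw [Sym2.eq_iff] at he
        rcases he with ⟨h1, h2⟩ | ⟨h1, h2⟩
        · exact ⟨h1 ▸ h2 ▸ hw, Or.inl h1⟩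
        · exact ⟨(h1 ▸ h2 ▸ hw).symm, Or.inr h1⟩
  have hinjc : Set.InjOn (fun w => s(c, w)) (G.neighborFinset c) :=
    fun a _ b _ h => Sym2.congr_right.mp h
  have hcardA : (G.edgeFinset.filter (fun e => c ∈ e)).card = s + 4 := by
    rw [hAim, Finset.card_image_of_injOn hinjc]
    exact hc
  have hsumA : ∑ e ∈ G.edgeFinset.filter (fun e => c ∈ e), f e = (s + 4) * (n + 3) := by
    rw [hAim, Finset.sum_image hinjc]
    have hstep : ∀ w ∈ G.neighborFinset c, f s(c, w) = (s + 4) * G.degree w := by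
      intro w _
      rw [hfmk, hc]
    rw [Finset.sum_congr rfl hstep, ← Finset.mul_sum]
    congr 1
    -- ∑ w ∈ N(c), G.degree w = n + 3
    have hsplit2 := Finset.sum_filter_add_sum_filter_not (G.neighborFinset c)
      (fun w => G.degree w = 1) (fun w => G.degree w)
    have hseteq : (G.neighborFinset c).filter (fun w => G.degree w = 1)
        = univ.filter (fun v => G.degree v = 1 ∧ G.Adj c v) := by
      ext v
      simp only [Finset.mem_filter, mem_neighborFinset, Finset.mem_univ, true_and]
      tauto
    have h1 : ∑ w ∈ (G.neighborFinset c).filter (fun w => G.degree w = 1), G.degree w = 2 * s + 5 - n := by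
      rw [Finset.sum_congr rfl (fun w hw => (Finset.mem_filter.mp hw).2)]
      rw [Finset.sum_const, smul_eq_mul, mul_one, hseteq, hleafadj]
    have h2 : ∑ w ∈ (G.neighborFinset c).filter (fun w => ¬ G.degree w = 1), G.degree w
        = ((G.neighborFinset c).filter (fun w => ¬ G.degree w = 1)).card * 2 := by
      have hall : ∀ w ∈ (G.neighborFinset c).filter (fun w => ¬ G.degree w = 1), G.degree w = 2 := by
        intro w hw
        obtain ⟨hwN, hw1⟩ := Finset.mem_filter.mp hw
        have hadj : G.Adj c w := (mem_neighborFinset G c w).mp hwN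
        have hwc : w ≠ c := fun h => G.irrefl (h ▸ hadj)
        rcases hother w hwc with h | h
        · exact absurd h hw1
        · exact h
      rw [Finset.sum_congr rfl hall, Finset.sum_const, smul_eq_mul]
    have hcards : ((G.neighborFinset c).filter (fun w => G.degree w = 1)).card
        + ((G.neighborFinset c).filter (fun w => ¬ G.degree w = 1)).card = s + 4 := by
      rw [Finset.card_filter_add_card_filter_not]
      exact hc
    rw [hseteq, hleafadj] at hcards
    omega
  -- edges avoiding c
  set D : Finset (Sym2 V) := G.edgeFinset.filter (fun e => ¬ c ∈ e) with hD
  have hLB : D.filter (fun e => ∃ v ∈ e, G.degree v = 1)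
      = (univ.filter (fun v => G.degree v = 1 ∧ ¬ G.Adj c v)).image (fun v => s(v, nb v)) := by
    apply Finset.Subset.antisymm
    · intro e he
      revert he
      induction e using Sym2.ind with
      | _ x y =>
        intro he
        simp only [hD, Finset.mem_filter, mem_edgeFinset, mem_edgeSet, Sym2.mem_iff] at he
        obtain ⟨⟨hadj, hcn⟩, v, hv, hv1⟩ := he
        push_neg at hcn
        simp only [Finset.mem_image, Finset.mem_filter, Finset.mem_univ, true_and]
        rcases hv with rfl | rfl
        · refine ⟨v, ⟨hv1, hnadj v y hv1 hadj (fun h => hcn.2 h.symm)⟩, ?_⟩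
          rw [hnbuniq v y hv1 hadj]
        · refine ⟨v, ⟨hv1, hnadj v x hv1 hadj.symm (fun h => hcn.1 h.symm)⟩, ?_⟩
          rw [hnbuniq v x hv1 hadj.symm]
          exact Sym2.eq_swap
    · intro e he
      obtain ⟨v, hv, rfl⟩ := Finset.mem_image.mp he
      obtain ⟨hv1, hvc⟩ : G.degree v = 1 ∧ ¬ G.Adj c v := by
        simpa using hv
      have hadj := hnbadj v hv1
      have hvne : v ≠ c := hcne v (Or.inl hv1)
      have hnbne : nb v ≠ c := by
        intro h
        exact hvc (h ▸ hadj).symm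
      simp only [hD, Finset.mem_filter, mem_edgeFinset, mem_edgeSet, Sym2.mem_iff]
      exact ⟨⟨hadj, by tauto⟩, v, Or.inl rfl, hv1⟩
  have hinj2 : Set.InjOn (fun v => s(v, nb v))
      (univ.filter (fun v => G.degree v = 1 ∧ ¬ G.Adj c v)) := by
    intro a ha b hb hab
    simp only [Finset.coe_filter, Set.mem_setOf_eq, Finset.mem_univ, true_and] at ha hb
    simp only [Sym2.eq_iff] at hab
    rcases hab with ⟨h, -⟩ | ⟨h, -⟩
    · exact h
    · exfalso
      have h2 : G.degree (nb b) = 2 := hleafnbr b (nb b) hb.1 hb.2 (hnbadj b hb.1)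
      rw [← h, ha.1] at h2
      omega
  have hcardDB : (D.filter (fun e => ∃ v ∈ e, G.degree v = 1)).card = n - s - 5 := by
    rw [hLB, Finset.card_image_of_injOn hinj2, hleafnadj]
  have hsumDB : ∑ e ∈ D.filter (fun e => ∃ v ∈ e, G.degree v = 1), f e = 2 * (n - s - 5) := by
    have hval : ∀ e ∈ D.filter (fun e => ∃ v ∈ e, G.degree v = 1), f e = 2 := by
      intro e he
      revert he
      induction e using Sym2.ind with
      | _ x y =>
        intro he
        simp only [hD, Finset.mem_filter, mem_edgeFinset, mem_edgeSet, Sym2.mem_iff] at he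
        obtain ⟨⟨hadj, hcn⟩, v, hv, hv1⟩ := he
        push_neg at hcn
        rw [hfmk]
        rcases hv with rfl | rfl
        · rw [hv1, hleafnbr v y hv1 (hnadj v y hv1 hadj (fun h => hcn.2 h.symm)) hadj]
        · rw [hv1, hleafnbr v x hv1 (hnadj v x hv1 hadj.symm (fun h => hcn.1 h.symm)) hadj.symm]
    rw [Finset.sum_congr rfl hval, Finset.sum_const, smul_eq_mul, hcardDB, mul_comm]
  have hcardD : D.card = n + 1 - (s + 4) := by
    have h := Finset.card_filter_add_card_filter_not (s := G.edgeFinset)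
      (p := fun e => c ∈ e)
    rw [hedges] at h
    rw [hD]
    omega
  have hcardDC : (D.filter (fun e => ¬ ∃ v ∈ e, G.degree v = 1)).card = 2 := by
    have h := Finset.card_filter_add_card_filter_not (s := D)
      (p := fun e => ∃ v ∈ e, G.degree v = 1)
    omega
  have hsumDC : ∑ e ∈ D.filter (fun e => ¬ ∃ v ∈ e, G.degree v = 1), f e = 8 := by
    have hval : ∀ e ∈ D.filter (fun e => ¬ ∃ v ∈ e, G.degree v = 1), f e = 4 := by
      intro e he
      revert he
      induction e using Sym2.ind with
      | _ x y =>
        intro he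
        simp only [hD, Finset.mem_filter, mem_edgeFinset, mem_edgeSet, Sym2.mem_iff] at he
        obtain ⟨⟨hadj, hcn⟩, hnl⟩ := he
        push_neg at hcn hnl
        have hx1 := hnl x (Or.inl rfl)
        have hy1 := hnl y (Or.inr rfl)
        have hx2 : G.degree x = 2 := by
          rcases hother x (fun h => hcn.1 h.symm) with h | h
          · exact absurd h hx1
          · exact h
        have hy2 : G.degree y = 2 := by
          rcases hother y (fun h => hcn.2 h.symm) with h | h
          · exact absurd h hy1
          · exact h
        rw [hfmk, hx2, hy2]
    rw [Finset.sum_congr rfl hval, Finset.sum_const, smul_eq_mul, hcardDC]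
  have hsplit := Finset.sum_filter_add_sum_filter_not G.edgeFinset (fun e => c ∈ e) f
  have hsplitD := Finset.sum_filter_add_sum_filter_not D (fun e => ∃ v ∈ e, G.degree v = 1) f
  rw [← hsplit, hsumA, ← hD, ← hsplitD, hsumDB, hsumDC]
  obtain ⟨m, rfl⟩ : ∃ m, n = s + 5 + m := ⟨n - s - 5, by omega⟩
  have hm : s + 5 + m - s - 5 = m := by omega
  rw [hm]
  ring

end KeyLemma

/-- `B(3,3; 2,…,2,1,…,1)` for `(n−5)/2 < s ≤ n − 5`: two triangles sharing a vertex
`c`, with `n − s − 5` pendant paths of length 2 and `2s − n + 5` pendant edges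
attached at `c`.  Structurally: `G` is connected with `n + 1` edges, `c` has degree
`s + 4`, every other vertex has degree 1 or 2, there are exactly `s` leaves, exactly
`2s + 5 − n` of the leaves are adjacent to `c`, and every neighbour of a leaf that
is not adjacent to `c` has degree 2.  Then `M2 = sn + 6n + s + 10`. -/

theorem stmt_12 {V : Type*} [Fintype V] (G : SimpleGraph V) (n s : ℕ)
    (hs1 : n < 2 * s + 5) (hs2 : s + 5 ≤ n)
    (hcard : Fintype.card V = n)
    (hconn : G.Connected) (hedges : G.edgeSet.ncard = n + 1)
    (hdeg : ∃ c : V, deg G c = s + 4 ∧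
      (∀ v : V, v ≠ c → deg G v = 1 ∨ deg G v = 2) ∧
      {v : V | deg G v = 1}.ncard = s ∧
      {v : V | deg G v = 1 ∧ G.Adj c v}.ncard = 2 * s + 5 - n ∧
      (∀ v w : V, deg G v = 1 → ¬ G.Adj c v → G.Adj v w → deg G w = 2)) :
    M2 G = s * n + 6 * n + s + 10 := by
  classical
  obtain ⟨c, hc, hother, hleaves, hleafadj, hleafnbr⟩ := hdeg
  have hdeg' : ∀ v, deg G v = G.degree v := by
    intro v; unfold deg; congr!
  simp only [hdeg'] at hc hother hleaves hleafadj hleafnbr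
  have hedges' : G.edgeFinset.card = n + 1 := by
    rw [← hedges, Set.ncard_eq_toFinset_card']
    try congr!
  have hleaves' : (univ.filter (fun v => G.degree v = 1)).card = s := by
    rw [← hleaves, Set.ncard_eq_toFinset_card', Set.toFinset_setOf]
  have hleafadj' : (univ.filter (fun v => G.degree v = 1 ∧ G.Adj c v)).card = 2 * s + 5 - n := by
    rw [← hleafadj, Set.ncard_eq_toFinset_card', Set.toFinset_setOf]
  have hleafnadj' : (univ.filter (fun v => G.degree v = 1 ∧ ¬ G.Adj c v)).card = n - s - 5 := by
    have h := Finset.card_filter_add_card_filter_not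
      (s := univ.filter (fun v => G.degree v = 1)) (p := fun v => G.Adj c v)
    rw [Finset.filter_filter, Finset.filter_filter, hleaves'] at h
    rw [hleafadj'] at h
    omega
  have hmain := key_lemma G n s hs1 hs2 hedges' c hc hother hleafadj' hleafnadj' hleafnbr
  rw [← hmain]
  unfold M2
  try congr!
end

section
/- Let n ≥ 13 and let π = (4,4,4,4,4,1,1,1,1,1,1,1,1) be a bicyclic graphic degree sequence (5 vertices of degree 4 and 8 leaves, n = 13). Then there exist two non-isomorphic bicyclic graphs G and G' both with degree sequence π achieving the same second Zagreb index M2(G) = M2(G'), and this common value is the maximum of M2 over all bicyclic graphs with degree sequence π. -/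
open SimpleGraph Finset

/- All bicyclic graphs with degree sequence `π = (4^(5), 1^(8))` have the same second Zagreb
index. Being connected with more than two vertices, such a graph has no edge joining two leaves,
so each of the eight leaves lies on its own pendant edge, of weight `1 · 4`, and each of the
remaining six edges joins two vertices of degree 4, of weight `4 · 4`: `M2 = 8 · 4 + 6 · 16`.
Hence any two non-isomorphic realizations are both extremal. -/

namespace SimpleGraph

section Degrees

variable {V : Type*} [Fintype V] {G : SimpleGraph V} [DecidableRel G.Adj]

lemma deg_eq_degree (v : V) : deg G v = G.degree v := by
  unfold deg; congr!

lemma ncard_setOf_deg_eq (k : ℕ) : {v | deg G v = k}.ncard = #{v | G.degree v = k} := by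
  simp only [deg_eq_degree, ← Set.ncard_coe_finset, coe_filter, mem_univ, true_and]

lemma ncard_edgeSet_eq_card_edgeFinset : G.edgeSet.ncard = #G.edgeFinset := by
  rw [← coe_edgeFinset, Set.ncard_coe_finset]

lemma M2_eq_sum : M2 G = ∑ e ∈ G.edgeFinset,
    Sym2.lift ⟨fun x y => G.degree x * G.degree y, fun _ _ => Nat.mul_comm _ _⟩ e := by
  unfold M2; congr!

variable [DecidableEq V]

lemma Connected.degree_ne_one_of_adj (hG : G.Connected) (hV : 2 < Fintype.card V) {u v : V}
    (huv : G.Adj u v) (hu : G.degree u = 1) : G.degree v ≠ 1 := by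
  intro hv
  obtain ⟨w, -, hw⟩ := exists_mem_notMem_of_card_lt_card (s := {u, v}) (t := univ)
    (card_le_two.trans_lt hV)
  have hclosed : ∀ x ∈ ({u, v} : Set V), ∀ y, G.Adj x y → y ∈ ({u, v} : Set V) := by
    rintro x (rfl | rfl) y hxy
    · exact .inr ((degree_eq_one_iff_existsUnique_adj.mp hu).unique hxy huv)
    · exact .inl ((degree_eq_one_iff_existsUnique_adj.mp hv).unique hxy huv.symm)
  obtain ⟨d, -, hd, hd'⟩ := (hG.preconnected u w).some.exists_boundary_dart {u, v}
    (by simp) (by simpa using hw)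
  exact hd' (hclosed _ hd _ d.adj)

lemma card_filter_edgeFinset_exists_degree_eq_one
    (hleaf : ∀ ⦃u v⦄, G.Adj u v → G.degree u = 1 → G.degree v ≠ 1) :
    #{e ∈ G.edgeFinset | ∃ w ∈ e, G.degree w = 1} = #{v | G.degree v = 1} := by
  have hpendant : {e ∈ G.edgeFinset | ∃ w ∈ e, G.degree w = 1} =
      ({v | G.degree v = 1} : Finset V).biUnion (G.incidenceFinset ·) := by
    ext e
    simp only [mem_filter, mem_edgeFinset, mem_biUnion, mem_univ, true_and, mem_incidenceFinset,
      incidenceSet, Set.mem_ofPred_eq]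
    tauto
  rw [hpendant, card_biUnion, card_eq_sum_ones]
  · refine sum_congr rfl fun v hv => ?_
    rw [card_incidenceFinset_eq_degree, (mem_filter.mp hv).2]
  · intro u hu v hv huv
    refine Finset.disjoint_left.mpr fun e heu hev => ?_
    rw [mem_incidenceFinset] at heu hev
    exact hleaf (G.adj_of_mem_incidenceSet huv heu hev) (mem_filter.mp hu).2 (mem_filter.mp hv).2

lemma M2_eq_of_forall_degree_eq_one_or (k : ℕ) (hdeg : ∀ v, G.degree v = 1 ∨ G.degree v = k)
    (hleaf : ∀ ⦃u v⦄, G.Adj u v → G.degree u = 1 → G.degree v ≠ 1) :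
    M2 G = k * #{v | G.degree v = 1} + k ^ 2 * (#G.edgeFinset - #{v | G.degree v = 1}) := by
  set P : Sym2 V → Prop := fun e => ∃ w ∈ e, G.degree w = 1
  set weight : Sym2 V → ℕ :=
    Sym2.lift ⟨fun x y => G.degree x * G.degree y, fun _ _ => Nat.mul_comm _ _⟩
  have hother : ∀ ⦃u v⦄, G.Adj u v → G.degree u = 1 → G.degree v = k := fun u v huv hu =>
    (hdeg v).resolve_left (hleaf huv hu)
  have hpendant : ∀ e ∈ {e ∈ G.edgeFinset | P e}, weight e = k := by
    rintro ⟨a, b⟩ he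
    obtain ⟨hab, ha | hb⟩ := by simpa [P] using he
    · simp [weight, ha, hother hab ha]
    · simp [weight, hb, hother hab.symm hb]
  have hcore : ∀ e ∈ {e ∈ G.edgeFinset | ¬P e}, weight e = k ^ 2 := by
    rintro ⟨a, b⟩ he
    obtain ⟨-, ha, hb⟩ := by simpa [P] using he
    simp [weight, (hdeg a).resolve_left ha, (hdeg b).resolve_left hb, sq]
  rw [M2_eq_sum, ← sum_filter_add_sum_filter_not _ P, sum_const_nat hpendant,
    sum_const_nat hcore, ← card_filter_add_card_filter_not (s := G.edgeFinset) P,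
    card_filter_edgeFinset_exists_degree_eq_one hleaf, Nat.add_sub_cancel_left]
  ring

end Degrees

lemma connected_of_forall_exists_adj_lt {α : Type*} [Preorder α] [WellFoundedLT α]
    {G : SimpleGraph α} (r : α) (h : ∀ v, v ≠ r → ∃ u < v, G.Adj u v) : G.Connected := by
  refine (connected_iff_exists_forall_reachable G).mpr ⟨r, fun v => ?_⟩
  induction v using WellFoundedLT.induction with
  | _ v ih =>
    by_cases hv : v = r
    · exact hv ▸ Reachable.rfl
    · obtain ⟨u, huv, hadj⟩ := h v hv
      exact (ih u huv).trans hadj.reachable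

section LeafNeighbors

variable {V W : Type*} [Fintype V] [Fintype W]

def leafNeighborCount (G : SimpleGraph V) [DecidableRel G.Adj] (v : V) : ℕ :=
  #{u | G.Adj v u ∧ G.degree u = 1}

lemma Iso.leafNeighborCount_eq {G : SimpleGraph V} {G' : SimpleGraph W} [DecidableRel G.Adj]
    [DecidableRel G'.Adj] (f : G ≃g G') (v : V) :
    G'.leafNeighborCount (f v) = G.leafNeighborCount v :=
  (card_equiv f.toEquiv fun u => by simp [f.map_adj_iff]).symm

end LeafNeighbors

end SimpleGraph

/-- The bicyclic graphs (connected, with `13 + 1` edges) of degree sequence `π = (4^(5), 1^(8))`. -/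
def IsBicyclicRealization (G : SimpleGraph (Fin 13)) : Prop :=
  G.Connected ∧ G.edgeSet.ncard = 14 ∧ {v | deg G v = 4}.ncard = 5 ∧ {v | deg G v = 1}.ncard = 8

lemma IsBicyclicRealization.M2_eq {G : SimpleGraph (Fin 13)} (hG : IsBicyclicRealization G) :
    M2 G = 128 := by
  classical
  obtain ⟨hconn, hedges, hfour, hleaves⟩ := hG
  rw [ncard_edgeSet_eq_card_edgeFinset] at hedges
  rw [ncard_setOf_deg_eq] at hfour hleaves
  have hdeg : ∀ v, G.degree v = 1 ∨ G.degree v = 4 := by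
    have hcard : #{v | G.degree v = 1 ∨ G.degree v = 4} = #(univ : Finset (Fin 13)) := by
      rw [filter_or, card_union_of_disjoint (disjoint_filter.mpr fun _ _ h => by omega),
        hleaves, hfour]
      rfl
    simpa using card_filter_eq_iff.mp hcard
  rw [M2_eq_of_forall_degree_eq_one_or 4 hdeg
    (fun _ _ huv hu => hconn.degree_ne_one_of_adj (by simp) huv hu), hedges, hleaves]
  rfl

/-- Two triangles `012`, `013` sharing the edge `01`, with the fifth core vertex `4` attached
to `0` and leaves filling every core vertex up to degree 4. -/
def sharedEdgeGraph : SimpleGraph (Fin 13) := fromRel fun a b => (a, b) ∈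
  [(0, 1), (0, 2), (1, 2), (0, 3), (1, 3), (0, 4),
   (1, 5), (2, 6), (2, 7), (3, 8), (3, 9), (4, 10), (4, 11), (4, 12)]

/-- Two triangles `012`, `034` sharing the vertex `0`, each other core vertex carrying two
leaves. -/
def sharedVertexGraph : SimpleGraph (Fin 13) := fromRel fun a b => (a, b) ∈
  [(0, 1), (0, 2), (1, 2), (0, 3), (0, 4), (3, 4),
   (1, 5), (1, 6), (2, 7), (2, 8), (3, 9), (3, 10), (4, 11), (4, 12)]

instance : DecidableRel sharedEdgeGraph.Adj := inferInstanceAs (DecidableRel (fromRel _).Adj)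

instance : DecidableRel sharedVertexGraph.Adj := inferInstanceAs (DecidableRel (fromRel _).Adj)

lemma isBicyclicRealization_sharedEdgeGraph : IsBicyclicRealization sharedEdgeGraph := by
  refine ⟨connected_of_forall_exists_adj_lt 0 (by decide), ?_, ?_, ?_⟩
  · rw [ncard_edgeSet_eq_card_edgeFinset]; decide
  all_goals rw [ncard_setOf_deg_eq]; decide

lemma isBicyclicRealization_sharedVertexGraph : IsBicyclicRealization sharedVertexGraph := by
  refine ⟨connected_of_forall_exists_adj_lt 0 (by decide), ?_, ?_, ?_⟩
  · rw [ncard_edgeSet_eq_card_edgeFinset]; decide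
  all_goals rw [ncard_setOf_deg_eq]; decide

lemma isEmpty_iso_sharedEdgeGraph_sharedVertexGraph :
    IsEmpty (sharedEdgeGraph ≃g sharedVertexGraph) := by
  refine ⟨fun f => ?_⟩
  have hedge : sharedEdgeGraph.leafNeighborCount 4 = 3 := by decide
  have hvertex : ∀ v, sharedVertexGraph.leafNeighborCount v ≠ 3 := by decide
  exact hvertex (f 4) (by rw [f.leafNeighborCount_eq, hedge])

/-- For the bicyclic degree sequence `π = (4^{(5)}, 1^{(8)})` on `n = 13` vertices,
there exist two non-isomorphic bicyclic graphs with degree sequence `π` having the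
same second Zagreb index, and this common value is the maximum of `M2` over all
bicyclic graphs with degree sequence `π`. -/
theorem stmt_19 :
    ∃ G G' : SimpleGraph (Fin 13),
      (G.Connected ∧ G.edgeSet.ncard = 14 ∧
        {v | deg G v = 4}.ncard = 5 ∧ {v | deg G v = 1}.ncard = 8) ∧
      (G'.Connected ∧ G'.edgeSet.ncard = 14 ∧
        {v | deg G' v = 4}.ncard = 5 ∧ {v | deg G' v = 1}.ncard = 8) ∧
      IsEmpty (G ≃g G') ∧
      M2 G = M2 G' ∧
      ∀ H : SimpleGraph (Fin 13),
        H.Connected → H.edgeSet.ncard = 14 →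
        {v | deg H v = 4}.ncard = 5 → {v | deg H v = 1}.ncard = 8 →
        M2 H ≤ M2 G := by
  have hG := isBicyclicRealization_sharedEdgeGraph
  have hG' := isBicyclicRealization_sharedVertexGraph
  refine ⟨sharedEdgeGraph, sharedVertexGraph, hG, hG',
    isEmpty_iso_sharedEdgeGraph_sharedVertexGraph, by rw [hG.M2_eq, hG'.M2_eq], ?_⟩
  intro H hconn hedges hfour hleaves
  rw [IsBicyclicRealization.M2_eq ⟨hconn, hedges, hfour, hleaves⟩, hG.M2_eq]
end
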